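/- arXiv:1004.1715 — 7 statements merged into one kernel-verified Lean document; each statement's English description precedes it below -/
import Mathlib

section
/- If a, b ∈ ℝ satisfy a < 1 and a + b > 1, then there is a constant C depending only on a and b such that for all f, g ∈ L²(ℝ²), ‖|D|^{-a}⟨D⟩^{-b}(fg)‖_{L²} ≤ C ‖f‖_{L²} ‖g‖_{L²}. -/
/-!
By Hölder's inequality and translation invariance of Lebesgue measure, the convolution of two
`L²` functions is bounded pointwise by `‖f‖₂ ‖g‖₂`, so the left-hand side is at most
`‖m‖₂ ‖f‖₂ ‖g‖₂` for the multiplier `m(ξ) = |ξ|^{-a} ⟨ξ⟩^{-b}`. In polar coordinates,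
`m ∈ L²(ℝ²)` says that `r ↦ r · m(r)²` is integrable on `(0, ∞)`; since `m(r) ≤ r^{-a}` and
`m(r) ≤ r^{-(a+b)}`, this is a convergent Mellin integral as soon as `2a < 2 < 2(a + b)`.
-/

open MeasureTheory Real
open scoped ENNReal

theorem norm_rpow_neg_mul_one_add_sq_rpow_neg_le {r : ℝ} (hr : 0 < r) (a : ℝ) {b : ℝ}
    (hb : 0 ≤ b) :
    ‖r ^ (-a) * (1 + r ^ 2) ^ (-(b / 2))‖ ≤ min (r ^ (-a)) (r ^ (-(a + b))) := by
  rw [norm_of_nonneg (by positivity)]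
  refine le_min (mul_le_of_le_one_right (by positivity)
    (rpow_le_one_of_one_le_of_nonpos (by nlinarith) (by linarith))) ?_
  calc r ^ (-a) * (1 + r ^ 2) ^ (-(b / 2)) ≤ r ^ (-a) * (r ^ 2) ^ (-(b / 2)) := by
        refine mul_le_mul_of_nonneg_left ?_ (by positivity)
        exact rpow_le_rpow_of_nonpos (by positivity) (by linarith) (by linarith)
    _ = r ^ (-(a + b)) := by
        rw [← rpow_natCast, ← rpow_mul hr.le, ← rpow_add hr]
        congr 1
        push_cast
        ring

open Asymptotics in
theorem isBigO_norm_rpow_of_norm_le_rpow_neg {E : Type*} [NormedAddCommGroup E] {f : ℝ → E}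
    {l : Filter ℝ} {c p : ℝ} (hp : 0 ≤ p) (hf : ∀ᶠ r in l, 0 < r ∧ ‖f r‖ ≤ r ^ (-c)) :
    (fun r => ‖f r‖ ^ p) =O[l] (· ^ (-(p * c))) := by
  refine IsBigO.of_bound 1 ?_
  filter_upwards [hf] with r ⟨hr, hfr⟩
  rw [one_mul, norm_of_nonneg (by positivity), norm_of_nonneg (by positivity),
    show -(p * c) = -c * p by ring, rpow_mul hr.le]
  exact rpow_le_rpow (norm_nonneg _) hfr hp

open Filter Set in
theorem memLp_rpow_neg_norm_mul_one_add_norm_sq_rpow_neg {E : Type*} [NormedAddCommGroup E]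
    [NormedSpace ℝ E] [FiniteDimensional ℝ E] [MeasurableSpace E] [BorelSpace E] [Nontrivial E]
    (μ : Measure E) [μ.IsAddHaarMeasure] {p : ℝ≥0∞} (hp0 : p ≠ 0) (hp : p ≠ ∞) {a b : ℝ}
    (ha : p.toReal * a < Module.finrank ℝ E)
    (hab : (Module.finrank ℝ E : ℝ) < p.toReal * (a + b)) :
    MemLp (fun x : E => ‖x‖ ^ (-a) * (1 + ‖x‖ ^ 2) ^ (-(b / 2))) p μ := by
  have hp' : 0 < p.toReal := ENNReal.toReal_pos hp0 hp
  have hb : 0 ≤ b := by nlinarith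
  have hcont : ContinuousOn (fun r : ℝ => ‖r ^ (-a) * (1 + r ^ 2) ^ (-(b / 2))‖ ^ p.toReal)
      (Ioi 0) := by
    intro r (hr : 0 < r)
    refine ContinuousAt.continuousWithinAt ?_
    fun_prop (disch := first | exact Or.inr hp'.le | exact Or.inl (by positivity))
  have hmellin := mellin_convergent_of_isBigO_scalar (hcont.locallyIntegrableOn measurableSet_Ioi)
    (isBigO_norm_rpow_of_norm_le_rpow_neg hp'.le <| (eventually_gt_atTop 0).mono fun r hr =>
      ⟨hr, (norm_rpow_neg_mul_one_add_sq_rpow_neg_le hr a hb).trans (min_le_right _ _)⟩) hab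
    (isBigO_norm_rpow_of_norm_le_rpow_neg hp'.le <| eventually_mem_nhdsWithin.mono fun r hr =>
      ⟨hr, (norm_rpow_neg_mul_one_add_sq_rpow_neg_le hr a hb).trans (min_le_left _ _)⟩) ha
  rw [← integrable_norm_rpow_iff (by fun_prop) hp0 hp,
    integrable_fun_norm_addHaar μ (f := fun r => ‖r ^ (-a) * (1 + r ^ 2) ^ (-(b / 2))‖ ^ p.toReal)]
  refine hmellin.congr_fun (fun r _ => ?_) measurableSet_Ioi
  rw [smul_eq_mul, ← rpow_natCast, Nat.cast_sub Module.finrank_pos, Nat.cast_one]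

theorem enorm_integral_mul_sub_le_eLpNorm_mul_eLpNorm {G 𝕜 : Type*} [MeasurableSpace G]
    [AddGroup G] [MeasurableAdd G] [MeasurableNeg G] {μ : Measure G} [μ.IsAddLeftInvariant]
    [μ.IsNegInvariant] [NormedRing 𝕜] [NormedSpace ℝ 𝕜] {p q : ℝ≥0∞} [p.HolderConjugate q]
    {f g : G → 𝕜} (hf : AEStronglyMeasurable f μ) (hg : AEStronglyMeasurable g μ) (ξ : G) :
    ‖∫ η, f η * g (ξ - η) ∂μ‖ₑ ≤ eLpNorm f p μ * eLpNorm g q μ := by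
  have hsub := μ.measurePreserving_sub_left ξ
  calc ‖∫ η, f η * g (ξ - η) ∂μ‖ₑ ≤ eLpNorm (f • (g ∘ (ξ - ·))) 1 μ := by
        rw [eLpNorm_one_eq_lintegral_enorm]
        exact enorm_integral_le_lintegral_enorm _
    _ ≤ eLpNorm f p μ * eLpNorm (g ∘ (ξ - ·)) q μ :=
        eLpNorm_smul_le_mul_eLpNorm (hg.comp_measurePreserving hsub) hf
    _ = eLpNorm f p μ * eLpNorm g q μ := by rw [eLpNorm_comp_measurePreserving hg hsub]

theorem sobolev_product_estimate (a b : ℝ) (ha : a < 1) (hab : 1 < a + b) :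
    ∃ C : ℝ, 0 < C ∧ ∀ f g : EuclideanSpace ℝ (Fin 2) → ℂ,
      MemLp f 2 volume → MemLp g 2 volume →
      eLpNorm (fun ξ : EuclideanSpace ℝ (Fin 2) =>
          (((‖ξ‖ ^ (-a) * (1 + ‖ξ‖ ^ 2) ^ (-(b/2)) : ℝ)) : ℂ) *
            ∫ η : EuclideanSpace ℝ (Fin 2), f η * g (ξ - η)) 2 volume
        ≤ ENNReal.ofReal C * (eLpNorm f 2 volume * eLpNorm g 2 volume) := by
  set m : EuclideanSpace ℝ (Fin 2) → ℂ := fun ξ => ((‖ξ‖ ^ (-a) * (1 + ‖ξ‖ ^ 2) ^ (-(b/2)) : ℝ))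
  have hm : MemLp m 2 volume := by
    refine (memLp_rpow_neg_norm_mul_one_add_norm_sq_rpow_neg volume two_ne_zero
      ENNReal.ofNat_ne_top ?_ ?_).ofReal <;>
      simp only [ENNReal.toReal_ofNat, finrank_euclideanSpace_fin, Nat.cast_ofNat] <;> linarith
  refine ⟨(eLpNorm m 2 volume).toReal + 1, by positivity, fun f g hf hg => ?_⟩
  calc _ ≤ (eLpNorm f 2 volume * eLpNorm g 2 volume) * eLpNorm m 2 volume :=
        eLpNorm_le_mul_eLpNorm_of_ae_le_mul'' 2 hm.1 <| ae_of_all _ fun ξ => by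
          rw [enorm_mul, mul_comm]
          exact mul_le_mul_left
            (enorm_integral_mul_sub_le_eLpNorm_mul_eLpNorm (p := 2) (q := 2) hf.1 hg.1 ξ) _
    _ ≤ ENNReal.ofReal ((eLpNorm m 2 volume).toReal + 1) *
          (eLpNorm f 2 volume * eLpNorm g 2 volume) := by
        rw [mul_comm]
        gcongr
        rw [ENNReal.le_ofReal_iff_toReal_le hm.eLpNorm_ne_top (by positivity)]
        linarith
end

section
/- Let N, d, γ > 0 and let Ω(γ) be a maximal γ-separated subset of the unit circle 𝕊¹ ⊂ ℝ². Then for all (τ, ξ) ∈ ℝ × ℝ² with |ξ| ∼ N, the number of ω ∈ Ω(γ) such that |τ + ξ·ω| ≲ d is bounded by a constant times 1 + (d/(Nγ²))^{1/2}. -/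
/-!
With `e = ξ / ‖ξ‖`, the condition `|τ + ⟪ξ, ω⟫| ≤ c₂ d` confines `⟪e, ω⟫` to an interval of
length `2ε`, where `ε = c₂ d / ‖ξ‖ ≲ d / N`. On each closed half-circle bounded by the line `ℝ e`
the angle `θ = ∠(e, ω)` measures angular distances exactly, and
`(θ₁ - θ₂)² ≤ (π² / 2) |cos θ₁ - cos θ₂|` shows that the strip meets it in an arc of length
at most `π √ε`. Such an arc holds at most `2π √ε / γ + 1` points of a `γ`-separated set, which
gives `O(1 + √(d / (N γ²)))` points in all.
-/

open InnerProductGeometry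
open scoped RealInnerProductSpace

noncomputable section

/-- `Ω` is a maximal `γ`-separated subset of the unit circle in ℝ². -/
def IsMaximalSeparated (γ : ℝ) (Ω : Set (EuclideanSpace ℝ (Fin 2))) : Prop :=
  (∀ ω ∈ Ω, ‖ω‖ = 1) ∧
  (∀ ω₁ ∈ Ω, ∀ ω₂ ∈ Ω, ω₁ ≠ ω₂ → γ ≤ angle ω₁ ω₂) ∧
  (∀ v : EuclideanSpace ℝ (Fin 2), ‖v‖ = 1 → ∃ ω ∈ Ω, angle v ω < γ)

open Real Set Module
open scoped EuclideanSpace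

theorem finite_and_ncard_le_of_subset_Icc {T : Set ℝ} {a b γ : ℝ} (hγ : 0 < γ) (hab : a ≤ b)
    (hT : T ⊆ Icc a b) (hsep : T.Pairwise fun x y => γ ≤ |x - y|) :
    T.Finite ∧ (T.ncard : ℝ) ≤ (b - a) / γ + 1 := by
  set f : ℝ → ℕ := fun x => ⌊(x - a) / γ⌋₊
  have hmaps : MapsTo f T (Finset.range (⌊(b - a) / γ⌋₊ + 1)) := fun x hx => by
    simp only [Finset.coe_range, mem_Iio, Nat.lt_succ_iff]
    exact Nat.floor_le_floor (by gcongr; exact (hT hx).2)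
  have hinj : InjOn f T := by
    intro x hx y hy hxy
    by_contra hne
    have hfloor : ⌊(x - a) / γ⌋ = ⌊(y - a) / γ⌋ := by
      rw [← Int.natCast_floor_eq_floor (div_nonneg (by linarith [(hT hx).1]) hγ.le),
        ← Int.natCast_floor_eq_floor (div_nonneg (by linarith [(hT hy).1]) hγ.le)]
      exact congrArg _ hxy
    have h := Int.abs_sub_lt_one_of_floor_eq_floor hfloor
    rw [← sub_div, sub_sub_sub_cancel_right, abs_div, abs_of_pos hγ, div_lt_one hγ] at h
    exact (hsep hx hy hne).not_gt h
  have hfin := Finset.finite_toSet (Finset.range (⌊(b - a) / γ⌋₊ + 1))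
  refine ⟨hfin.of_injOn hmaps hinj, ?_⟩
  have hcard := ncard_le_ncard_of_injOn f hmaps hinj hfin
  rw [ncard_coe_finset, Finset.card_range] at hcard
  calc (T.ncard : ℝ) ≤ (⌊(b - a) / γ⌋₊ + 1 : ℕ) := by exact_mod_cast hcard
    _ ≤ (b - a) / γ + 1 := by
      push_cast
      gcongr
      exact Nat.floor_le (div_nonneg (by linarith) hγ.le)

theorem sq_sub_le_mul_abs_cos_sub_cos {θ₁ θ₂ : ℝ} (h₁ : θ₁ ∈ Icc 0 π) (h₂ : θ₂ ∈ Icc 0 π) :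
    (θ₁ - θ₂) ^ 2 ≤ π ^ 2 / 2 * |cos θ₁ - cos θ₂| := by
  wlog hle : θ₁ ≤ θ₂ generalizing θ₁ θ₂
  · rw [abs_sub_comm, ← neg_sub, neg_sq]
    exact this h₂ h₁ (by linarith)
  set h := (θ₂ - θ₁) / 2 with hdef
  set m := (θ₁ + θ₂) / 2
  have hh : h ∈ Icc 0 (π / 2) := ⟨by linarith, by linarith [h₁.1, h₂.2]⟩
  have hsin_h : 0 ≤ sin h := sin_nonneg_of_nonneg_of_le_pi hh.1 (by linarith [pi_pos, hh.2])
  have hcos : cos θ₁ - cos θ₂ = 2 * sin m * sin h := by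
    rw [cos_sub_cos, show (θ₁ - θ₂) / 2 = -h by ring, sin_neg]; ring
  -- `sin m - sin h = 2 sin (θ₁ / 2) cos (θ₂ / 2)` with both half-angles in `[0, π / 2]`
  have hsin_le : sin h ≤ sin m := by
    have := sin_sub_sin m h
    rw [show (m - h) / 2 = θ₁ / 2 by ring, show (m + h) / 2 = θ₂ / 2 by ring] at this
    have h₃ : 0 ≤ sin (θ₁ / 2) :=
      sin_nonneg_of_nonneg_of_le_pi (by linarith [h₁.1]) (by linarith [h₁.2, pi_pos])
    have h₄ : 0 ≤ cos (θ₂ / 2) :=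
      cos_nonneg_of_mem_Icc ⟨by linarith [h₂.1, pi_pos], by linarith [h₂.2]⟩
    nlinarith [mul_nonneg h₃ h₄]
  have hjordan : 2 / π * h ≤ sin h := mul_le_sin hh.1 hh.2
  have hpi := pi_pos
  calc (θ₁ - θ₂) ^ 2 = π ^ 2 / 2 * (2 * (2 / π * h) ^ 2) := by field_simp; ring
    _ ≤ π ^ 2 / 2 * (2 * sin h ^ 2) := by gcongr
    _ ≤ π ^ 2 / 2 * |cos θ₁ - cos θ₂| := by
      gcongr
      rw [hcos]
      nlinarith [le_abs_self (2 * sin m * sin h), mul_le_mul_of_nonneg_right hsin_le hsin_h]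

namespace Orientation

variable {E : Type*} [NormedAddCommGroup E] [InnerProductSpace ℝ E] [Fact (finrank ℝ E = 2)]
  (o : Orientation ℝ E (Fin 2))

theorem sin_angle_eq_areaForm {e w : E} (he : ‖e‖ = 1) (hw : ‖w‖ = 1)
    (hpos : 0 ≤ o.areaForm e w) : sin (angle e w) = o.areaForm e w := by
  have hsq : sin (angle e w) ^ 2 = o.areaForm e w ^ 2 := by
    have := o.inner_sq_add_areaForm_sq e w
    rw [sin_sq, cos_angle, he, hw] at *
    linarith
  exact (pow_left_inj₀ (sin_angle_nonneg e w) hpos two_ne_zero).1 hsq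

theorem angle_eq_abs_angle_sub_angle {e u v : E} (he : ‖e‖ = 1) (hu : ‖u‖ = 1) (hv : ‖v‖ = 1)
    (hu₀ : 0 ≤ o.areaForm e u) (hv₀ : 0 ≤ o.areaForm e v) :
    angle u v = |angle e u - angle e v| := by
  have hcos : cos |angle e u - angle e v| = ⟪u, v⟫ := by
    rw [cos_abs, cos_sub, o.sin_angle_eq_areaForm he hu hu₀, o.sin_angle_eq_areaForm he hv hv₀,
      cos_angle, cos_angle, he, hu, hv, mul_one, div_one, div_one,
      o.inner_mul_inner_add_areaForm_mul_areaForm, he, one_pow, one_mul]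
  rw [angle, hu, hv, one_mul, div_one, ← hcos, arccos_cos (abs_nonneg _)]
  rw [abs_le]
  constructor <;> linarith [angle_nonneg e u, angle_le_pi e u, angle_nonneg e v, angle_le_pi e v]

theorem finite_and_ncard_le_of_areaForm_nonneg {e : E} (he : ‖e‖ = 1) {T : Set E}
    {γ ε t : ℝ} (hγ : 0 < γ) (hT : ∀ w ∈ T, ‖w‖ = 1)
    (hsep : T.Pairwise fun u v => γ ≤ angle u v) (hpos : ∀ w ∈ T, 0 ≤ o.areaForm e w)
    (hstrip : ∀ w ∈ T, |⟪e, w⟫ - t| ≤ ε) :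
    T.Finite ∧ (T.ncard : ℝ) ≤ 2 * π * √ε / γ + 1 := by
  rcases T.eq_empty_or_nonempty with rfl | ⟨w₀, hw₀⟩
  · simp only [finite_empty, ncard_empty, Nat.cast_zero, true_and]
    positivity
  have hangle : ∀ u ∈ T, ∀ v ∈ T, angle u v = |angle e u - angle e v| := fun u hu v hv =>
    o.angle_eq_abs_angle_sub_angle he (hT u hu) (hT v hv) (hpos u hu) (hpos v hv)
  have hinj : InjOn (angle e) T := fun u hu v hv huv => by
    by_contra hne
    have : γ ≤ angle u v := hsep hu hv hne
    rw [hangle u hu v hv, huv, sub_self, abs_zero] at this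
    exact hγ.not_ge this
  have hdiam : ∀ w ∈ T, |angle e w - angle e w₀| ≤ π * √ε := fun w hw => by
    have hcos : |cos (angle e w) - cos (angle e w₀)| ≤ 2 * ε := by
      rw [cos_angle, cos_angle, he, hT w hw, hT w₀ hw₀, one_mul, div_one, div_one,
        ← sub_sub_sub_cancel_right _ _ t]
      linarith [abs_sub (⟪e, w⟫ - t) (⟪e, w₀⟫ - t), hstrip w hw, hstrip w₀ hw₀]
    have := (sq_sub_le_mul_abs_cos_sub_cos ⟨angle_nonneg e w, angle_le_pi e w⟩
      ⟨angle_nonneg e w₀, angle_le_pi e w₀⟩).trans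
      (mul_le_mul_of_nonneg_left hcos (by positivity))
    rw [show π ^ 2 / 2 * (2 * ε) = π ^ 2 * ε by ring] at this
    simpa [sqrt_mul (sq_nonneg π), sqrt_sq pi_pos.le] using abs_le_sqrt this
  have hsub : angle e '' T ⊆ Icc (angle e w₀ - π * √ε) (angle e w₀ + π * √ε) := by
    rintro _ ⟨w, hw, rfl⟩
    exact ⟨by linarith [(abs_le.1 (hdiam w hw)).1], by linarith [(abs_le.1 (hdiam w hw)).2]⟩
  have himage_sep : (angle e '' T).Pairwise fun x y => γ ≤ |x - y| := by
    rintro _ ⟨u, hu, rfl⟩ _ ⟨v, hv, rfl⟩ hne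
    show γ ≤ _
    rw [← hangle u hu v hv]
    exact hsep hu hv fun h => hne (h ▸ rfl)
  have hwidth : 0 ≤ π * √ε := by positivity
  obtain ⟨hfin, hcard⟩ := finite_and_ncard_le_of_subset_Icc hγ (by linarith) hsub himage_sep
  refine ⟨hfin.of_finite_image hinj, ?_⟩
  rw [hinj.ncard_image] at hcard
  convert hcard using 2
  ring

end Orientation

theorem finite_and_ncard_le_of_abs_inner_sub_le {E : Type*} [NormedAddCommGroup E]
    [InnerProductSpace ℝ E] [Fact (finrank ℝ E = 2)] {e : E} (he : ‖e‖ = 1) {T : Set E}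
    {γ ε t : ℝ} (hγ : 0 < γ) (hT : ∀ w ∈ T, ‖w‖ = 1)
    (hsep : T.Pairwise fun u v => γ ≤ angle u v) (hstrip : ∀ w ∈ T, |⟪e, w⟫ - t| ≤ ε) :
    T.Finite ∧ (T.ncard : ℝ) ≤ 4 * π * √ε / γ + 2 := by
  have : FiniteDimensional ℝ E := .of_fact_finrank_eq_two
  let o : Orientation ℝ E (Fin 2) := (finBasisOfFinrankEq ℝ E Fact.out).orientation
  have half (o : Orientation ℝ E (Fin 2)) :=
    o.finite_and_ncard_le_of_areaForm_nonneg he hγ (T := {w ∈ T | 0 ≤ o.areaForm e w})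
      (fun w hw => hT w hw.1) (hsep.mono fun _ hw => hw.1) (fun _ hw => hw.2)
      (fun w hw => hstrip w hw.1)
  obtain ⟨hfin_pos, hcard_pos⟩ := half o
  obtain ⟨hfin_neg, hcard_neg⟩ := half (-o)
  have hsplit : T = {w ∈ T | 0 ≤ o.areaForm e w} ∪ {w ∈ T | 0 ≤ (-o).areaForm e w} := by
    ext w
    simp only [o.areaForm_neg_orientation, mem_union, mem_ofPred_eq, LinearMap.neg_apply,
      neg_nonneg]
    constructor
    · intro hw; exact (le_total 0 (o.areaForm e w)).imp (⟨hw, ·⟩) (⟨hw, ·⟩)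
    · rintro (hw | hw) <;> exact hw.1
  rw [hsplit]
  refine ⟨hfin_pos.union hfin_neg, ?_⟩
  calc _ ≤ (({w ∈ T | 0 ≤ o.areaForm e w}.ncard +
          {w ∈ T | 0 ≤ (-o).areaForm e w}.ncard : ℕ) : ℝ) := by
        exact_mod_cast ncard_union_le _ _
    _ ≤ _ := by
      push_cast
      linarith [show 4 * π * √ε / γ = 2 * (2 * π * √ε / γ) by ring]

theorem hyperplane_counting (c₁ c₂ : ℝ) (hc₁ : 1 ≤ c₁) (hc₂ : 0 < c₂) :
    ∃ C : ℝ, 0 < C ∧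
      ∀ (N d γ : ℝ), 0 < N → 0 < d → 0 < γ →
        ∀ Ω : Set (EuclideanSpace ℝ (Fin 2)), IsMaximalSeparated γ Ω →
          ∀ (τ : ℝ) (ξ : EuclideanSpace ℝ (Fin 2)),
            N / c₁ ≤ ‖ξ‖ → ‖ξ‖ ≤ c₁ * N →
            ({ω ∈ Ω | |τ + ⟪ξ, ω⟫| ≤ c₂ * d}).Finite ∧
            (({ω ∈ Ω | |τ + ⟪ξ, ω⟫| ≤ c₂ * d}).ncard : ℝ)
              ≤ C * (1 + (d / (N * γ ^ 2)) ^ ((1:ℝ)/2)) := by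
  refine ⟨2 + 4 * π * √(c₁ * c₂), by positivity, ?_⟩
  rintro N d γ hN hd hγ Ω ⟨hΩ, hsep, -⟩ τ ξ hlo -
  have hξ : 0 < ‖ξ‖ := (div_pos hN (by linarith)).trans_le hlo
  have hstrip : ∀ ω ∈ {ω ∈ Ω | |τ + ⟪ξ, ω⟫| ≤ c₂ * d},
      |⟪‖ξ‖⁻¹ • ξ, ω⟫ - -τ / ‖ξ‖| ≤ c₂ * d / ‖ξ‖ := fun ω hω => by
    rw [real_inner_smul_left, show ‖ξ‖⁻¹ * ⟪ξ, ω⟫ - -τ / ‖ξ‖ = (τ + ⟪ξ, ω⟫) / ‖ξ‖ by ring,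
      abs_div, abs_of_pos hξ]
    exact div_le_div_of_nonneg_right hω.2 hξ.le
  obtain ⟨hfin, hcard⟩ := finite_and_ncard_le_of_abs_inner_sub_le
    (norm_smul_inv_norm (norm_pos_iff.1 hξ)) hγ (fun ω hω => hΩ ω hω.1)
    (fun u hu v hv huv => hsep u hu.1 v hv.1 huv) hstrip
  refine ⟨hfin, hcard.trans ?_⟩
  have hε : c₂ * d / ‖ξ‖ / γ ^ 2 ≤ c₁ * c₂ * (d / (N * γ ^ 2)) := by
    calc c₂ * d / ‖ξ‖ / γ ^ 2 = c₂ * d / (‖ξ‖ * γ ^ 2) := by rw [div_div]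
      _ ≤ c₂ * d / (N / c₁ * γ ^ 2) := by gcongr
      _ = c₁ * c₂ * (d / (N * γ ^ 2)) := by field_simp
  have hroot : √(c₂ * d / ‖ξ‖) / γ ≤ √(c₁ * c₂) * √(d / (N * γ ^ 2)) := by
    rw [← sqrt_mul (by positivity), ← sqrt_sq hγ.le, ← sqrt_div' _ (sq_nonneg γ), sqrt_sq hγ.le]
    exact sqrt_le_sqrt hε
  rw [← sqrt_eq_rpow]
  calc 4 * π * √(c₂ * d / ‖ξ‖) / γ + 2 = 4 * π * (√(c₂ * d / ‖ξ‖) / γ) + 2 := by ring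
    _ ≤ 4 * π * (√(c₁ * c₂) * √(d / (N * γ ^ 2))) + 2 := by gcongr
    _ ≤ (2 + 4 * π * √(c₁ * c₂)) * (1 + √(d / (N * γ ^ 2))) := by
      nlinarith [sqrt_nonneg (c₁ * c₂), sqrt_nonneg (d / (N * γ ^ 2)), pi_pos]

end
end

section
/- For every pair of nonzero vectors ξ₁, ξ₂ ∈ ℝ² with θ(ξ₁,ξ₂) > 0, we have 1 ≲ ∑_{γ} ∑_{(ω₁,ω₂)} χ_{Γ_γ(ω₁)}(ξ₁) χ_{Γ_γ(ω₂)}(ξ₂) ≲ 1, where the outer sum is over dyadic γ with 0 < γ < 1 and the inner sum is over pairs ω₁, ω₂ ∈ Ω(γ) with 3γ ≤ θ(ω₁,ω₂) ≤ 12γ. -/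
/-!
By the triangle inequality for angles, `|θ(ξ₁,ξ₂) - θ(ω₁,ω₂)| ≤ 2γ` whenever `ξᵢ ∈ Γ_γ(ωᵢ)`.
Hence a contributing scale satisfies `γ ≤ θ(ξ₁,ξ₂) < 16γ`, leaving at most four dyadic scales,
and the scale with `5γ ≤ θ(ξ₁,ξ₂) < 10γ` does contribute, with `ωᵢ ∈ Ω(γ)` at angle less
than `γ` from `ξᵢ` (maximality). At a fixed scale, cut the plane into arcs of width `γ` by the oriented angle measured
from `ξᵢ`: two points in one arc are less than `γ` apart, so a `γ`-separated set has at most one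
point in each arc, and only three arcs meet `Γ_γ(ξᵢ)`. So at most `4 · 3 · 3` triples contribute.
-/

open InnerProductGeometry

noncomputable section

open Real
open scoped EuclideanSpace

namespace InnerProductGeometry

variable {V : Type*} [NormedAddCommGroup V] [InnerProductSpace ℝ V]

theorem abs_angle_sub_angle_le (ξ₁ ξ₂ ω₁ ω₂ : V) :
    |angle ξ₁ ξ₂ - angle ω₁ ω₂| ≤ angle ξ₁ ω₁ + angle ξ₂ ω₂ := by
  rw [abs_sub_le_iff]
  constructor <;> linarith [angle_le_angle_add_angle ξ₁ ω₁ ξ₂, angle_le_angle_add_angle ω₁ ω₂ ξ₂,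
    angle_le_angle_add_angle ω₁ ξ₁ ω₂, angle_le_angle_add_angle ξ₁ ξ₂ ω₂,
    angle_comm ω₁ ξ₁, angle_comm ω₂ ξ₂]

end InnerProductGeometry

namespace Orientation

variable {V : Type*} [NormedAddCommGroup V] [InnerProductSpace ℝ V]
  [Fact (Module.finrank ℝ V = 2)] (o : Orientation ℝ V (Fin 2))

theorem angle_eq_abs_sub_toReal_oangle {ξ x y : V} (hξ : ξ ≠ 0) (hx : x ≠ 0) (hy : y ≠ 0)
    (h : |(o.oangle ξ y).toReal - (o.oangle ξ x).toReal| < π) :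
    angle x y = |(o.oangle ξ y).toReal - (o.oangle ξ x).toReal| := by
  have hxy : o.oangle x y = ((o.oangle ξ y).toReal - (o.oangle ξ x).toReal : ℝ) := by
    rw [Real.Angle.coe_sub, Real.Angle.coe_toReal, Real.Angle.coe_toReal,
      o.oangle_sub_left hξ hx hy]
  rw [o.angle_eq_abs_oangle_toReal hx hy, hxy,
    Real.Angle.toReal_coe_eq_self_iff.2 ⟨(abs_lt.1 h).1, (abs_lt.1 h).2.le⟩]

def sectorIndex (ξ : V) (γ : ℝ) (ω : V) : ℤ :=
  ⌊(o.oangle ξ ω).toReal / γ⌋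

theorem sectorIndex_mem_Icc {ξ ω : V} {γ : ℝ} (hγ : 0 < γ) (hξ : ξ ≠ 0) (hω : ω ≠ 0)
    (h : angle ξ ω ≤ γ) : o.sectorIndex ξ γ ω ∈ Finset.Icc (-1) 1 := by
  rw [o.angle_eq_abs_oangle_toReal hξ hω, abs_le] at h
  have hlo : -1 ≤ (o.oangle ξ ω).toReal / γ := by rw [le_div_iff₀ hγ]; linarith
  have hhi : (o.oangle ξ ω).toReal / γ ≤ 1 := by rw [div_le_iff₀ hγ]; linarith
  exact Finset.mem_Icc.2
    ⟨Int.le_floor.2 (by exact_mod_cast hlo), Int.floor_le_iff.2 (by push_cast; linarith)⟩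

theorem angle_lt_of_sectorIndex_eq {ξ x y : V} {γ : ℝ} (hγ : 0 < γ) (hγπ : γ ≤ π)
    (hξ : ξ ≠ 0) (hx : x ≠ 0) (hy : y ≠ 0) (h : o.sectorIndex ξ γ x = o.sectorIndex ξ γ y) :
    angle x y < γ := by
  have hdiff : |(o.oangle ξ y).toReal - (o.oangle ξ x).toReal| < γ := by
    have := Int.abs_sub_lt_one_of_floor_eq_floor h.symm
    rwa [← sub_div, abs_div, abs_of_pos hγ, div_lt_one hγ] at this
  rw [o.angle_eq_abs_sub_toReal_oangle hξ hx hy (hdiff.trans_le hγπ)]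
  exact hdiff

end Orientation

theorem exists_forall_mem_Ioc_of_zpow_le_of_lt_zpow {b θ : ℝ} (hb : 1 < b) (hθ : 0 < θ)
    (k : ℤ) :
    ∃ m : ℤ, ∀ j : ℤ, b ^ j ≤ θ → θ < b ^ (j + k) → j ∈ Finset.Ioc (m - k) m := by
  obtain ⟨m, hm, hm'⟩ := exists_mem_Ico_zpow hθ hb
  refine ⟨m, fun j hj hj' => Finset.mem_Ioc.2 ⟨?_, ?_⟩⟩
  · have := (zpow_lt_zpow_iff_right₀ hb).1 (hm.trans_lt hj'); omega
  · have := (zpow_lt_zpow_iff_right₀ hb).1 (hj.trans_lt hm'); omega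

local notation "ℝ²" => EuclideanSpace ℝ (Fin 2)

namespace IsMaximalSeparated

variable {γ : ℝ} {Ω : Set ℝ²}

theorem ne_zero (h : IsMaximalSeparated γ Ω) {ω : ℝ²} (hω : ω ∈ Ω) : ω ≠ 0 := by
  rintro rfl
  simpa using h.1 0 hω

theorem exists_angle_lt (h : IsMaximalSeparated γ Ω) {ξ : ℝ²} (hξ : ξ ≠ 0) :
    ∃ ω ∈ Ω, angle ξ ω < γ := by
  simpa using h.2.2 _ (NormedSpace.norm_normalize_eq_one_iff.2 hξ)

theorem eq_of_angle_lt (h : IsMaximalSeparated γ Ω) {ω ω' : ℝ²} (hω : ω ∈ Ω) (hω' : ω' ∈ Ω)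
    (hlt : angle ω ω' < γ) : ω = ω' :=
  by_contra fun hne => (h.2.1 ω hω ω' hω' hne).not_gt hlt

end IsMaximalSeparated

/-- Each summand of the double sum is `0` or `1`, so the sum is the number of triples
`(j, ω₁, ω₂)` in this set, with `γ = 2 ^ j`. -/
def whitneyTriples (Ω : ℤ → Set ℝ²) (ξ₁ ξ₂ : ℝ²) : Set (ℤ × ℝ² × ℝ²) :=
  {p | p.1 < 0 ∧ p.2.1 ∈ Ω p.1 ∧ p.2.2 ∈ Ω p.1 ∧
    3 * (2:ℝ) ^ p.1 ≤ angle p.2.1 p.2.2 ∧ angle p.2.1 p.2.2 ≤ 12 * (2:ℝ) ^ p.1 ∧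
    angle ξ₁ p.2.1 ≤ (2:ℝ) ^ p.1 ∧ angle ξ₂ p.2.2 ≤ (2:ℝ) ^ p.1}

def whitneyCode (o : Orientation ℝ ℝ² (Fin 2)) (ξ₁ ξ₂ : ℝ²) (p : ℤ × ℝ² × ℝ²) :
    ℤ × ℤ × ℤ :=
  (p.1, o.sectorIndex ξ₁ (2 ^ p.1) p.2.1, o.sectorIndex ξ₂ (2 ^ p.1) p.2.2)

section WhitneyTriples

variable {Ω : ℤ → Set ℝ²} {ξ₁ ξ₂ : ℝ²}

theorem whitneyTriples_nonempty
    (hΩ : ∀ j : ℤ, j < 0 → IsMaximalSeparated ((2:ℝ) ^ j) (Ω j)) (h₁ : ξ₁ ≠ 0) (h₂ : ξ₂ ≠ 0)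
    (hθ : 0 < angle ξ₁ ξ₂) :
    (whitneyTriples Ω ξ₁ ξ₂).Nonempty := by
  -- at the scale with `5γ ≤ θ < 10γ`, the error `< 2γ` keeps `θ(ω₁,ω₂)` inside `[3γ, 12γ]`
  obtain ⟨j, hj, hj'⟩ := exists_mem_Ico_zpow (div_pos hθ (by norm_num : (0:ℝ) < 5)) one_lt_two
  rw [zpow_add_one₀ two_ne_zero] at hj'
  have hj0 : j < 0 := by
    by_contra! h
    have : (1:ℝ) ≤ 2 ^ j := one_le_zpow₀ one_le_two h
    linarith [angle_le_pi ξ₁ ξ₂, pi_lt_four]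
  obtain ⟨ω₁, hω₁, ha₁⟩ := (hΩ j hj0).exists_angle_lt h₁
  obtain ⟨ω₂, hω₂, ha₂⟩ := (hΩ j hj0).exists_angle_lt h₂
  have := abs_le.1 (abs_angle_sub_angle_le ξ₁ ξ₂ ω₁ ω₂)
  exact ⟨(j, ω₁, ω₂), hj0, hω₁, hω₂, by linarith, by linarith, ha₁.le, ha₂.le⟩

theorem angle_mem_Ico_of_mem_whitneyTriples {p : ℤ × ℝ² × ℝ²}
    (hp : p ∈ whitneyTriples Ω ξ₁ ξ₂) :
    angle ξ₁ ξ₂ ∈ Set.Ico ((2:ℝ) ^ p.1) (2 ^ (p.1 + 4)) := by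
  obtain ⟨-, -, -, hlo, hhi, ha₁, ha₂⟩ := hp
  have := abs_le.1 (abs_angle_sub_angle_le ξ₁ ξ₂ p.2.1 p.2.2)
  have hpos : (0:ℝ) < 2 ^ p.1 := zpow_pos two_pos p.1
  rw [Set.mem_Ico, zpow_add₀ two_ne_zero]
  constructor <;> norm_num <;> linarith

theorem injOn_whitneyCode (o : Orientation ℝ ℝ² (Fin 2))
    (hΩ : ∀ j : ℤ, j < 0 → IsMaximalSeparated ((2:ℝ) ^ j) (Ω j)) (h₁ : ξ₁ ≠ 0) (h₂ : ξ₂ ≠ 0) :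
    (whitneyTriples Ω ξ₁ ξ₂).InjOn (whitneyCode o ξ₁ ξ₂) := by
  rintro ⟨j, ω₁, ω₂⟩ ⟨hj, hω₁, hω₂, -⟩ ⟨j', ω₁', ω₂'⟩ ⟨-, hω₁', hω₂', -⟩ hcode
  simp only [whitneyCode, Prod.mk.injEq] at hcode
  obtain ⟨rfl, hs₁, hs₂⟩ := hcode
  have hγ : (0:ℝ) < 2 ^ j := zpow_pos two_pos j
  have hγπ : (2:ℝ) ^ j ≤ π :=
    (zpow_le_one_of_nonpos₀ one_le_two hj.le).trans (one_le_two.trans two_le_pi)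
  have hΩj := hΩ j hj
  refine Prod.ext rfl (Prod.ext ?_ ?_)
  · exact hΩj.eq_of_angle_lt hω₁ hω₁' <| o.angle_lt_of_sectorIndex_eq hγ hγπ h₁
      (hΩj.ne_zero hω₁) (hΩj.ne_zero hω₁') hs₁
  · exact hΩj.eq_of_angle_lt hω₂ hω₂' <| o.angle_lt_of_sectorIndex_eq hγ hγπ h₂
      (hΩj.ne_zero hω₂) (hΩj.ne_zero hω₂') hs₂

theorem exists_finset_mapsTo_whitneyCode (o : Orientation ℝ ℝ² (Fin 2))
    (hΩ : ∀ j : ℤ, j < 0 → IsMaximalSeparated ((2:ℝ) ^ j) (Ω j)) (h₁ : ξ₁ ≠ 0) (h₂ : ξ₂ ≠ 0)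
    (hθ : 0 < angle ξ₁ ξ₂) :
    ∃ F : Finset (ℤ × ℤ × ℤ), F.card = 36 ∧
      Set.MapsTo (whitneyCode o ξ₁ ξ₂) (whitneyTriples Ω ξ₁ ξ₂) F := by
  obtain ⟨m, hm⟩ := exists_forall_mem_Ioc_of_zpow_le_of_lt_zpow one_lt_two hθ 4
  refine ⟨Finset.Ioc (m - 4) m ×ˢ Finset.Icc (-1) 1 ×ˢ Finset.Icc (-1) 1, ?_, fun p hp => ?_⟩
  · rw [Finset.card_product, Finset.card_product, Int.card_Ioc, Int.card_Icc, sub_sub_cancel]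
    rfl
  obtain ⟨hlo, hhi⟩ := angle_mem_Ico_of_mem_whitneyTriples hp
  obtain ⟨hj, hω₁, hω₂, -, -, ha₁, ha₂⟩ := hp
  have hγ : (0:ℝ) < 2 ^ p.1 := zpow_pos two_pos p.1
  simp only [Finset.coe_product, Set.mem_prod, Finset.mem_coe, whitneyCode]
  exact ⟨hm p.1 hlo hhi,
    o.sectorIndex_mem_Icc hγ h₁ ((hΩ _ hj).ne_zero hω₁) ha₁,
    o.sectorIndex_mem_Icc hγ h₂ ((hΩ _ hj).ne_zero hω₂) ha₂⟩

end WhitneyTriples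

theorem whitney_decomposition :
    ∃ C : ℕ, 0 < C ∧
      ∀ Ω : ℤ → Set (EuclideanSpace ℝ (Fin 2)),
        (∀ j : ℤ, j < 0 → IsMaximalSeparated ((2:ℝ) ^ j) (Ω j)) →
        ∀ ξ₁ ξ₂ : EuclideanSpace ℝ (Fin 2), ξ₁ ≠ 0 → ξ₂ ≠ 0 →
          0 < angle ξ₁ ξ₂ →
          let S : Set (ℤ × EuclideanSpace ℝ (Fin 2) × EuclideanSpace ℝ (Fin 2)) :=
            {p | p.1 < 0 ∧ p.2.1 ∈ Ω p.1 ∧ p.2.2 ∈ Ω p.1 ∧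
              3 * (2:ℝ) ^ p.1 ≤ angle p.2.1 p.2.2 ∧ angle p.2.1 p.2.2 ≤ 12 * (2:ℝ) ^ p.1 ∧
              angle ξ₁ p.2.1 ≤ (2:ℝ) ^ p.1 ∧ angle ξ₂ p.2.2 ≤ (2:ℝ) ^ p.1}
          S.Nonempty ∧ S.Finite ∧ S.ncard ≤ C := by
  refine ⟨36, by norm_num, fun Ω hΩ ξ₁ ξ₂ h₁ h₂ hθ => ?_⟩
  let o : Orientation ℝ ℝ² (Fin 2) := (EuclideanSpace.basisFun (Fin 2) ℝ).toBasis.orientation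
  obtain ⟨F, hF, hmaps⟩ := exists_finset_mapsTo_whitneyCode o hΩ h₁ h₂ hθ
  have hinj := injOn_whitneyCode o hΩ h₁ h₂
  refine ⟨whitneyTriples_nonempty hΩ h₁ h₂ hθ, Set.Finite.of_injOn hmaps hinj F.finite_toSet, ?_⟩
  calc (whitneyTriples Ω ξ₁ ξ₂).ncard ≤ (F : Set (ℤ × ℤ × ℤ)).ncard :=
        Set.ncard_le_ncard_of_injOn _ (fun _ hp => hmaps hp) hinj
    _ = 36 := by rw [Set.ncard_coe_finset, hF]

end
end

section
/- Let (X₀, X₁, X₂) be a bilinear interaction, i.e. X₀ = X₁ − X₂ with X_j = (τ_j, ξ_j) ∈ ℝ × ℝ² and ξ_j ≠ 0 for j = 0,1,2. Given signs ±₀, ±₁, ±₂, set h_j = τ_j ±_j |ξ_j| and θ₁₂ = θ(±₁ξ₁, ±₂ξ₂). Then max(|h₀|, |h₁|, |h₂|) ≳ min(|ξ₁|, |ξ₂|) θ₁₂². -/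
/-!
With signs `s_j = ±1`, the combination `h₁ - h₂ - h₀ = s₁|ξ₁| - s₂|ξ₂| - s₀|ξ₁ - ξ₂|` no longer
involves the `τ_j`, and its absolute value dominates the defect of a triangle inequality for
`u = s₁ξ₁`, `v = s₂ξ₂`: of `|u| + |v| ≥ |u + v|` if `s₁ ≠ s₂`, of `|u - v| ≥ ||u| - |v||` if
`s₁ = s₂`. By the law of cosines the defect times the complementary factor (`|u| + |v| + |u + v|`,
resp. `|u - v| + ||u| - |v||`, both at most `2(|u| + |v|)`) equals `2|u||v|(1 - cos θ)`, so the
defect is at least `min(|u|, |v|)(1 - cos θ) / 2`. Jordan's inequality `1 - cos θ ≥ 2θ²/π²`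
concludes, with `C = 1 / (3π²)`.
-/

open InnerProductGeometry Real

theorem min_mul_le_two_mul_of_mul_eq {a b d e κ : ℝ} (ha : 0 ≤ a) (hb : 0 ≤ b) (hκ : 0 ≤ κ)
    (hd : 0 ≤ d) (he : e ≤ 2 * (a + b)) (hde : d * e = 2 * a * b * κ) :
    min a b * κ ≤ 2 * d := by
  rcases (add_nonneg ha hb).eq_or_lt with hab | hab
  · have : min a b = 0 := by rw [min_eq_left (by linarith)]; linarith
    rw [this, zero_mul]; positivity
  refine le_of_mul_le_mul_right ?_ hab
  have hmin : min a b * (a + b) ≤ 2 * (a * b) := by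
    rcases le_total a b with h | h
    · rw [min_eq_left h]; nlinarith
    · rw [min_eq_right h]; nlinarith
  calc min a b * κ * (a + b) = min a b * (a + b) * κ := by ring
    _ ≤ 2 * (a * b) * κ := mul_le_mul_of_nonneg_right hmin hκ
    _ = d * e := by rw [hde]; ring
    _ ≤ d * (2 * (a + b)) := mul_le_mul_of_nonneg_left he hd
    _ = 2 * d * (a + b) := by ring

theorem abs_sub_sub_le_three_mul_max (x y z : ℝ) :
    |x - y - z| ≤ 3 * max |z| (max |x| |y|) := by
  linarith [abs_sub (x - y) z, abs_sub x y, le_max_left |z| (max |x| |y|),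
    le_max_right |z| (max |x| |y|), le_max_left |x| |y|, le_max_right |x| |y|]

section TriangleDefect

variable {V : Type*} [NormedAddCommGroup V] [InnerProductSpace ℝ V]

theorem min_mul_one_sub_cos_angle_le_norm_add_defect (u v : V) :
    min ‖u‖ ‖v‖ * (1 - cos (angle u v)) ≤ 2 * (‖u‖ + ‖v‖ - ‖u + v‖) := by
  have hcos := cos_angle_mul_norm_mul_norm u v
  have hsq := norm_add_sq_real u v
  refine min_mul_le_two_mul_of_mul_eq (norm_nonneg u) (norm_nonneg v)
    (by linarith [cos_le_one (angle u v)]) (by linarith [norm_add_le u v])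
    (e := ‖u‖ + ‖v‖ + ‖u + v‖) (by linarith [norm_add_le u v]) ?_
  linear_combination -hsq + 2 * hcos

theorem min_mul_one_sub_cos_angle_le_norm_sub_defect (u v : V) :
    min ‖u‖ ‖v‖ * (1 - cos (angle u v)) ≤ 2 * (‖u - v‖ - |‖u‖ - ‖v‖|) := by
  have hcos := cos_angle_mul_norm_mul_norm u v
  have hsq := norm_sub_sq_real u v
  have hab : |‖u‖ - ‖v‖| ≤ ‖u‖ + ‖v‖ := by simpa using abs_sub ‖u‖ ‖v‖
  refine min_mul_le_two_mul_of_mul_eq (norm_nonneg u) (norm_nonneg v)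
    (by linarith [cos_le_one (angle u v)]) (by linarith [abs_norm_sub_norm_le u v])
    (e := ‖u - v‖ + |‖u‖ - ‖v‖|) (by linarith [norm_sub_le u v]) ?_
  linear_combination hsq + 2 * hcos - sq_abs (‖u‖ - ‖v‖)

theorem min_mul_one_sub_cos_angle_smul_le {s₀ s₁ s₂ : ℝ} (hs₀ : s₀ = 1 ∨ s₀ = -1)
    (hs₁ : s₁ = 1 ∨ s₁ = -1) (hs₂ : s₂ = 1 ∨ s₂ = -1) (ξ₁ ξ₂ : V) :
    min ‖ξ₁‖ ‖ξ₂‖ * (1 - cos (angle (s₁ • ξ₁) (s₂ • ξ₂)))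
      ≤ 2 * |s₁ * ‖ξ₁‖ - s₂ * ‖ξ₂‖ - s₀ * ‖ξ₁ - ξ₂‖| := by
  have hs₀c : |s₀ * ‖ξ₁ - ξ₂‖| = ‖ξ₁ - ξ₂‖ := by
    rcases hs₀ with rfl | rfl <;> simp
  have hlow (x : ℝ) : ‖ξ₁ - ξ₂‖ - |x| ≤ |x - s₀ * ‖ξ₁ - ξ₂‖| ∧
      |x| - ‖ξ₁ - ξ₂‖ ≤ |x - s₀ * ‖ξ₁ - ξ₂‖| := by
    have h₁ := abs_sub_abs_le_abs_sub (s₀ * ‖ξ₁ - ξ₂‖) x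
    have h₂ := abs_sub_abs_le_abs_sub x (s₀ * ‖ξ₁ - ξ₂‖)
    rw [hs₀c, abs_sub_comm] at h₁
    rw [hs₀c] at h₂
    exact ⟨h₁, h₂⟩
  rcases hs₁ with rfl | rfl <;> rcases hs₂ with rfl | rfl <;>
    simp only [one_smul, neg_one_smul, angle_neg_neg, one_mul, neg_one_mul]
  · have := min_mul_one_sub_cos_angle_le_norm_sub_defect ξ₁ ξ₂
    linarith [(hlow (‖ξ₁‖ - ‖ξ₂‖)).1]
  · have := min_mul_one_sub_cos_angle_le_norm_add_defect ξ₁ (-ξ₂)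
    rw [norm_neg, ← sub_eq_add_neg] at this
    linarith [(hlow (‖ξ₁‖ - -‖ξ₂‖)).2, le_abs_self (‖ξ₁‖ - -‖ξ₂‖)]
  · have := min_mul_one_sub_cos_angle_le_norm_add_defect (-ξ₁) ξ₂
    rw [norm_neg, neg_add_eq_sub, norm_sub_rev] at this
    linarith [(hlow (-‖ξ₁‖ - ‖ξ₂‖)).2, neg_le_abs (-‖ξ₁‖ - ‖ξ₂‖)]
  · have := min_mul_one_sub_cos_angle_le_norm_sub_defect ξ₁ ξ₂
    rw [neg_sub_neg]
    linarith [(hlow (‖ξ₂‖ - ‖ξ₁‖)).1, abs_sub_comm ‖ξ₁‖ ‖ξ₂‖]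

end TriangleDefect

theorem angles_lemma_basic :
    ∃ C : ℝ, 0 < C ∧
      ∀ (τ₀ τ₁ τ₂ : ℝ) (ξ₀ ξ₁ ξ₂ : EuclideanSpace ℝ (Fin 2)) (s₀ s₁ s₂ : ℝ),
        (s₀ = 1 ∨ s₀ = -1) → (s₁ = 1 ∨ s₁ = -1) → (s₂ = 1 ∨ s₂ = -1) →
        τ₀ = τ₁ - τ₂ → ξ₀ = ξ₁ - ξ₂ →
        ξ₀ ≠ 0 → ξ₁ ≠ 0 → ξ₂ ≠ 0 →
        C * (min ‖ξ₁‖ ‖ξ₂‖ * angle (s₁ • ξ₁) (s₂ • ξ₂) ^ 2)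
          ≤ max (|τ₀ + s₀ * ‖ξ₀‖|) (max (|τ₁ + s₁ * ‖ξ₁‖|) (|τ₂ + s₂ * ‖ξ₂‖|)) := by
  refine ⟨1 / (3 * π ^ 2), by positivity, ?_⟩
  intro τ₀ τ₁ τ₂ ξ₀ ξ₁ ξ₂ s₀ s₁ s₂ hs₀ hs₁ hs₂ hτ hξ _ _ _
  subst hτ hξ
  have hdefect := min_mul_one_sub_cos_angle_smul_le hs₀ hs₁ hs₂ ξ₁ ξ₂
  set θ := angle (s₁ • ξ₁) (s₂ • ξ₂)
  set M := max (|τ₁ - τ₂ + s₀ * ‖ξ₁ - ξ₂‖|) (max (|τ₁ + s₁ * ‖ξ₁‖|) (|τ₂ + s₂ * ‖ξ₂‖|))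
  have hcos : cos θ ≤ 1 - 2 / π ^ 2 * θ ^ 2 :=
    cos_le_one_sub_mul_cos_sq ((abs_of_nonneg (angle_nonneg _ _)).trans_le (angle_le_pi _ _))
  have hM : |s₁ * ‖ξ₁‖ - s₂ * ‖ξ₂‖ - s₀ * ‖ξ₁ - ξ₂‖| ≤ 3 * M := by
    convert abs_sub_sub_le_three_mul_max (τ₁ + s₁ * ‖ξ₁‖) (τ₂ + s₂ * ‖ξ₂‖)
      (τ₁ - τ₂ + s₀ * ‖ξ₁ - ξ₂‖) using 2
    ring
  rw [one_div, inv_mul_le_iff₀ (by positivity)]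
  calc min ‖ξ₁‖ ‖ξ₂‖ * θ ^ 2 = π ^ 2 / 2 * (min ‖ξ₁‖ ‖ξ₂‖ * (2 / π ^ 2 * θ ^ 2)) := by
        field_simp
    _ ≤ π ^ 2 / 2 * (min ‖ξ₁‖ ‖ξ₂‖ * (1 - cos θ)) := by gcongr; linarith
    _ ≤ π ^ 2 / 2 * (2 * (3 * M)) := by gcongr _ * ?_; linarith
    _ = 3 * π ^ 2 * M := by ring
end

section
/- Let (X₀,X₁,X₂) be a bilinear interaction X₀ = X₁ − X₂ with all ξ_j ≠ 0, signs ±₀,±₁,±₂, hyperbolic weights h_j = τ_j ±_j |ξ_j| and angles θ_{jk} = θ(±_jξ_j, ±_kξ_k). If it is NOT the case that (|ξ₀| ≪ |ξ₁| ∼ |ξ₂| and ±₁ ≠ ±₂), then max(|h₀|,|h₁|,|h₂|) ≳ |ξ₁||ξ₂|θ₁₂²/|ξ₀|; and if |ξ₀| ≪ |ξ₁| ∼ |ξ₂| and ±₁ ≠ ±₂, then θ₁₂ ∼ 1 and max(|h₀|,|h₁|,|h₂|) ≳ min(|ξ₁|,|ξ₂|). -/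
/-!
Put `u = s₁ • ξ₁`, `v = s₂ • ξ₂`, `a = |ξ₁|`, `b = |ξ₂|`, `d = |ξ₀|`, `θ = angle u v`. Since
`τ₀ = τ₁ - τ₂`, the resonance `h₁ - h₂ - h₀ = s₁ a - s₂ b - s₀ d` is at most `3 max |hⱼ|`, and
`1 - cos θ ≥ 2θ²/π²` turns the law of cosines into a lower bound by `abθ²`.
If `s₁ = s₂` then `d = |u - v|`, so `d² - (a - b)² = 2ab(1 - cos θ)`, while
`d - |a - b|` is at most the resonance and `d + |a - b| ≤ 2d`.
If `s₁ ≠ s₂` then `d = |u + v|`, so `(a + b)² - d² = 2ab(1 - cos θ)`, while `a + b - d` is at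
most the resonance; outside the regime `d ≪ a ∼ b` the triangle inequality gives `a + b ≲ d`.
Inside that regime `|u + v| < |u|` forces `θ > π/2`, and `b ≤ a + b - d ≲ max |hⱼ|`.
-/

open InnerProductGeometry

noncomputable section

/-- `|ξ₀| ≪ |ξ₁| ∼ |ξ₂|` with threshold constant `K`. -/
def LowOutput (K : ℝ) (ξ₀ ξ₁ ξ₂ : EuclideanSpace ℝ (Fin 2)) : Prop :=
  K * ‖ξ₀‖ ≤ ‖ξ₁‖ ∧ ‖ξ₁‖ ≤ K * ‖ξ₂‖ ∧ ‖ξ₂‖ ≤ K * ‖ξ₁‖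

open Real
open scoped RealInnerProductSpace

lemma pi_sq_le_ten : π ^ 2 ≤ 10 := by
  nlinarith [pi_lt_d2, pi_pos]

lemma abs_sub_sub_le_three_mul_max_s9 (h₀ h₁ h₂ : ℝ) :
    |h₁ - h₂ - h₀| ≤ 3 * max |h₀| (max |h₁| |h₂|) := by
  obtain ⟨h₀l, h₀u⟩ := abs_le.mp (le_max_left |h₀| (max |h₁| |h₂|))
  obtain ⟨h₁l, h₁u⟩ := abs_le.mp ((le_max_left |h₁| |h₂|).trans (le_max_right |h₀| _))
  obtain ⟨h₂l, h₂u⟩ := abs_le.mp ((le_max_right |h₁| |h₂|).trans (le_max_right |h₀| _))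
  exact abs_le.mpr ⟨by linarith, by linarith⟩

lemma abs_sub_abs_le_abs_mul_sub_mul {s t : ℝ} (hs : |s| = 1) (ht : |t| = 1) (x y : ℝ) :
    |x| - |y| ≤ |s * x - t * y| := by
  simpa [abs_mul, hs, ht] using abs_sub_abs_le_abs_sub (s * x) (t * y)

section InnerProductSpace

variable {V : Type*} [NormedAddCommGroup V] [InnerProductSpace ℝ V]

lemma pi_div_two_lt_angle_of_inner_neg {u v : V} (h : ⟪u, v⟫ < 0) : π / 2 < angle u v := by
  by_contra! hle
  have hcos : 0 ≤ cos (angle u v) :=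
    cos_nonneg_of_mem_Icc ⟨by linarith [pi_pos, angle_nonneg u v], hle⟩
  rw [← cos_angle_mul_norm_mul_norm] at h
  exact h.not_ge (by positivity)

lemma pi_div_two_lt_angle_of_norm_add_lt {u v : V} (h : ‖u + v‖ < ‖u‖) :
    π / 2 < angle u v := by
  apply pi_div_two_lt_angle_of_inner_neg
  nlinarith [norm_add_sq_real u v, norm_nonneg (u + v), sq_nonneg ‖v‖]

lemma angle_smul_neg_smul {s : ℝ} (hs : s ≠ 0) (u v : V) :
    angle (s • u) (-s • v) = angle u (-v) := by
  rw [neg_smul, ← smul_neg, angle_smul_smul hs]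

lemma norm_mul_norm_mul_angle_sq_le (u v : V) :
    ‖u‖ * ‖v‖ * angle u v ^ 2 ≤ π ^ 2 / 2 * (‖u‖ * ‖v‖ - ⟪u, v⟫) := by
  have hcos : cos (angle u v) ≤ 1 - 2 / π ^ 2 * angle u v ^ 2 :=
    cos_le_one_sub_mul_cos_sq (by rw [abs_of_nonneg (angle_nonneg u v)]; exact angle_le_pi u v)
  calc ‖u‖ * ‖v‖ * angle u v ^ 2 = π ^ 2 / 2 * (‖u‖ * ‖v‖ * (2 / π ^ 2 * angle u v ^ 2)) := by
        field_simp
    _ ≤ π ^ 2 / 2 * (‖u‖ * ‖v‖ * (1 - cos (angle u v))) := by gcongr; linarith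
    _ = π ^ 2 / 2 * (‖u‖ * ‖v‖ - ⟪u, v⟫) := by rw [← cos_angle_mul_norm_mul_norm]; ring

lemma norm_mul_norm_mul_angle_sq_le_of_norm_sub (u v : V) {E : ℝ}
    (hE : ‖u - v‖ - |‖u‖ - ‖v‖| ≤ E) :
    ‖u‖ * ‖v‖ * angle u v ^ 2 ≤ π ^ 2 / 2 * E * ‖u - v‖ := by
  have hd : |‖u‖ - ‖v‖| ≤ ‖u - v‖ := abs_norm_sub_norm_le u v
  calc ‖u‖ * ‖v‖ * angle u v ^ 2 ≤ π ^ 2 / 2 * (‖u‖ * ‖v‖ - ⟪u, v⟫) :=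
        norm_mul_norm_mul_angle_sq_le u v
    _ = π ^ 2 / 4 * ((‖u - v‖ - |‖u‖ - ‖v‖|) * (‖u - v‖ + |‖u‖ - ‖v‖|)) := by
        linear_combination (-π ^ 2 / 4) * norm_sub_sq_real u v + (π ^ 2 / 4) * sq_abs (‖u‖ - ‖v‖)
    _ ≤ π ^ 2 / 4 * (E * (2 * ‖u - v‖)) := by gcongr <;> linarith
    _ = π ^ 2 / 2 * E * ‖u - v‖ := by ring

lemma norm_mul_norm_mul_angle_sq_le_of_norm_add (u v : V) {E : ℝ}
    (hE : ‖u‖ + ‖v‖ - ‖u + v‖ ≤ E) :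
    ‖u‖ * ‖v‖ * angle u v ^ 2 ≤ π ^ 2 / 4 * E * (‖u‖ + ‖v‖ + ‖u + v‖) := by
  have hd : ‖u + v‖ ≤ ‖u‖ + ‖v‖ := norm_add_le u v
  calc ‖u‖ * ‖v‖ * angle u v ^ 2 ≤ π ^ 2 / 2 * (‖u‖ * ‖v‖ - ⟪u, v⟫) :=
        norm_mul_norm_mul_angle_sq_le u v
    _ = π ^ 2 / 4 * ((‖u‖ + ‖v‖ - ‖u + v‖) * (‖u‖ + ‖v‖ + ‖u + v‖)) := by
        linear_combination (π ^ 2 / 4) * norm_add_sq_real u v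
    _ ≤ π ^ 2 / 4 * (E * (‖u‖ + ‖v‖ + ‖u + v‖)) := by gcongr
    _ = π ^ 2 / 4 * E * (‖u‖ + ‖v‖ + ‖u + v‖) := by ring

lemma norm_mul_norm_mul_angle_sq_le_of_sign_eq {s₀ s : ℝ} (hs₀ : |s₀| = 1) (hs : |s| = 1)
    (ξ₁ ξ₂ : V) :
    ‖ξ₁‖ * ‖ξ₂‖ * angle (s • ξ₁) (s • ξ₂) ^ 2
      ≤ 5 * |s * ‖ξ₁‖ - s * ‖ξ₂‖ - s₀ * ‖ξ₁ - ξ₂‖| * ‖ξ₁ - ξ₂‖ := by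
  set E := |s * ‖ξ₁‖ - s * ‖ξ₂‖ - s₀ * ‖ξ₁ - ξ₂‖|
  rw [angle_smul_smul (by rintro rfl; simp at hs)]
  have hE : ‖ξ₁ - ξ₂‖ - |‖ξ₁‖ - ‖ξ₂‖| ≤ E := by
    simpa [E, ← mul_sub, abs_sub_comm (s₀ * _)] using
      abs_sub_abs_le_abs_mul_sub_mul hs₀ hs ‖ξ₁ - ξ₂‖ (‖ξ₁‖ - ‖ξ₂‖)
  calc _ ≤ π ^ 2 / 2 * E * ‖ξ₁ - ξ₂‖ := norm_mul_norm_mul_angle_sq_le_of_norm_sub ξ₁ ξ₂ hE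
    _ ≤ 5 * E * ‖ξ₁ - ξ₂‖ := by gcongr; linarith [pi_sq_le_ten]

lemma add_sub_le_abs_mul_sub_neg_mul_sub_mul {s₀ s a b d : ℝ} (hs₀ : |s₀| = 1) (hs : |s| = 1)
    (ha : 0 ≤ a) (hb : 0 ≤ b) (hd : 0 ≤ d) : a + b - d ≤ |s * a - -s * b - s₀ * d| := by
  simpa [abs_of_nonneg (add_nonneg ha hb), abs_of_nonneg hd, mul_add] using
    abs_sub_abs_le_abs_mul_sub_mul hs hs₀ (a + b) d

lemma norm_mul_norm_mul_angle_sq_le_of_sign_eq_neg {s₀ s : ℝ} (hs₀ : |s₀| = 1) (hs : |s| = 1)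
    {ξ₁ ξ₂ : V} (hξ : ‖ξ₁‖ + ‖ξ₂‖ ≤ 9 * ‖ξ₁ - ξ₂‖) :
    ‖ξ₁‖ * ‖ξ₂‖ * angle (s • ξ₁) (-s • ξ₂) ^ 2
      ≤ 25 * |s * ‖ξ₁‖ - -s * ‖ξ₂‖ - s₀ * ‖ξ₁ - ξ₂‖| * ‖ξ₁ - ξ₂‖ := by
  set E := |s * ‖ξ₁‖ - -s * ‖ξ₂‖ - s₀ * ‖ξ₁ - ξ₂‖|
  rw [angle_smul_neg_smul (by rintro rfl; simp at hs)]
  have hE : ‖ξ₁‖ + ‖ξ₂‖ - ‖ξ₁ - ξ₂‖ ≤ E := add_sub_le_abs_mul_sub_neg_mul_sub_mul hs₀ hs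
    (norm_nonneg ξ₁) (norm_nonneg ξ₂) (norm_nonneg (ξ₁ - ξ₂))
  have key := norm_mul_norm_mul_angle_sq_le_of_norm_add ξ₁ (-ξ₂) (E := E)
    (by rwa [norm_neg, ← sub_eq_add_neg])
  rw [norm_neg, ← sub_eq_add_neg] at key
  calc _ ≤ π ^ 2 / 4 * E * (‖ξ₁‖ + ‖ξ₂‖ + ‖ξ₁ - ξ₂‖) := key
    _ ≤ 10 / 4 * E * (10 * ‖ξ₁ - ξ₂‖) := by gcongr; exacts [pi_sq_le_ten, by linarith]
    _ = 25 * E * ‖ξ₁ - ξ₂‖ := by ring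

end InnerProductSpace

lemma norm_add_norm_le_of_not_lowOutput {ξ₁ ξ₂ : EuclideanSpace ℝ (Fin 2)}
    (h : ¬ LowOutput 4 (ξ₁ - ξ₂) ξ₁ ξ₂) : ‖ξ₁‖ + ‖ξ₂‖ ≤ 9 * ‖ξ₁ - ξ₂‖ := by
  have h₁ : ‖ξ₁‖ ≤ ‖ξ₁ - ξ₂‖ + ‖ξ₂‖ := norm_le_norm_sub_add ξ₁ ξ₂
  have h₂ : ‖ξ₂‖ ≤ ‖ξ₁‖ + ‖ξ₁ - ξ₂‖ := by simpa using norm_sub_le ξ₁ (ξ₁ - ξ₂)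
  simp only [LowOutput, not_and_or, not_le] at h
  rcases h with h | h | h <;> linarith

theorem angles_lemma_dichotomy :
    ∃ K : ℝ, 1 ≤ K ∧ ∃ c : ℝ, 0 < c ∧
      ∀ (τ₀ τ₁ τ₂ : ℝ) (ξ₀ ξ₁ ξ₂ : EuclideanSpace ℝ (Fin 2)) (s₀ s₁ s₂ : ℝ),
        (s₀ = 1 ∨ s₀ = -1) → (s₁ = 1 ∨ s₁ = -1) → (s₂ = 1 ∨ s₂ = -1) →
        τ₀ = τ₁ - τ₂ → ξ₀ = ξ₁ - ξ₂ →
        ξ₀ ≠ 0 → ξ₁ ≠ 0 → ξ₂ ≠ 0 →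
        (¬ (LowOutput K ξ₀ ξ₁ ξ₂ ∧ s₁ ≠ s₂) →
          c * (‖ξ₁‖ * ‖ξ₂‖ * angle (s₁ • ξ₁) (s₂ • ξ₂) ^ 2 / ‖ξ₀‖)
            ≤ max (|τ₀ + s₀ * ‖ξ₀‖|) (max (|τ₁ + s₁ * ‖ξ₁‖|) (|τ₂ + s₂ * ‖ξ₂‖|))) ∧
        ((LowOutput K ξ₀ ξ₁ ξ₂ ∧ s₁ ≠ s₂) →
          c ≤ angle (s₁ • ξ₁) (s₂ • ξ₂) ∧
          c * min ‖ξ₁‖ ‖ξ₂‖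
            ≤ max (|τ₀ + s₀ * ‖ξ₀‖|) (max (|τ₁ + s₁ * ‖ξ₁‖|) (|τ₂ + s₂ * ‖ξ₂‖|))) := by
  refine ⟨4, by norm_num, 1 / 100, by norm_num, ?_⟩
  intro τ₀ τ₁ τ₂ ξ₀ ξ₁ ξ₂ s₀ s₁ s₂ hs₀ hs₁ hs₂ hτ rfl hξ₀ _ _
  set M := max (|τ₀ + s₀ * ‖ξ₁ - ξ₂‖|) (max (|τ₁ + s₁ * ‖ξ₁‖|) (|τ₂ + s₂ * ‖ξ₂‖|))
  have habs {s : ℝ} (hs : s = 1 ∨ s = -1) : |s| = 1 := (abs_eq zero_le_one).mpr hs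
  have hres : |s₁ * ‖ξ₁‖ - s₂ * ‖ξ₂‖ - s₀ * ‖ξ₁ - ξ₂‖| ≤ 3 * M := by
    convert abs_sub_sub_le_three_mul_max_s9 (τ₀ + s₀ * ‖ξ₁ - ξ₂‖) (τ₁ + s₁ * ‖ξ₁‖)
      (τ₂ + s₂ * ‖ξ₂‖) using 2
    rw [hτ]; ring
  have hfirst (hK : ‖ξ₁‖ * ‖ξ₂‖ * angle (s₁ • ξ₁) (s₂ • ξ₂) ^ 2
      ≤ 25 * |s₁ * ‖ξ₁‖ - s₂ * ‖ξ₂‖ - s₀ * ‖ξ₁ - ξ₂‖| * ‖ξ₁ - ξ₂‖) :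
      1 / 100 * (‖ξ₁‖ * ‖ξ₂‖ * angle (s₁ • ξ₁) (s₂ • ξ₂) ^ 2 / ‖ξ₁ - ξ₂‖) ≤ M := by
    have hM : 0 ≤ M := (abs_nonneg _).trans (le_max_left _ _)
    rw [mul_div_assoc', div_le_iff₀ (norm_pos_iff.mpr hξ₀)]
    nlinarith [mul_le_mul_of_nonneg_right hres (norm_nonneg (ξ₁ - ξ₂)),
      mul_nonneg hM (norm_nonneg (ξ₁ - ξ₂))]
  rcases eq_or_ne s₂ s₁ with rfl | h
  · refine ⟨fun _ => hfirst ?_, fun h' => absurd rfl h'.2⟩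
    refine (norm_mul_norm_mul_angle_sq_le_of_sign_eq (habs hs₀) (habs hs₂) ξ₁ ξ₂).trans ?_
    gcongr; norm_num
  obtain rfl : s₂ = -s₁ := by grind
  by_cases hlow : LowOutput 4 (ξ₁ - ξ₂) ξ₁ ξ₂
  · refine ⟨fun h' => absurd ⟨hlow, h.symm⟩ h', fun _ => ⟨?_, ?_⟩⟩ <;>
      obtain ⟨hd, -⟩ := hlow
    · have := pi_div_two_lt_angle_of_norm_add_lt (u := ξ₁) (v := -ξ₂)
        (by rw [← sub_eq_add_neg]; linarith [norm_pos_iff.mpr hξ₀])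
      rw [angle_smul_neg_smul (by rintro rfl; simp at hs₁)]
      linarith [pi_gt_three]
    · have := add_sub_le_abs_mul_sub_neg_mul_sub_mul (habs hs₀) (habs hs₁) (norm_nonneg ξ₁)
        (norm_nonneg ξ₂) (norm_nonneg (ξ₁ - ξ₂))
      linarith [min_le_right ‖ξ₁‖ ‖ξ₂‖, norm_nonneg ξ₂, norm_nonneg (ξ₁ - ξ₂)]
  · exact ⟨fun _ => hfirst (norm_mul_norm_mul_angle_sq_le_of_sign_eq_neg (habs hs₀) (habs hs₁)
      (norm_add_norm_le_of_not_lowOutput hlow)), fun h' => absurd h'.1 hlow⟩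
end
end

section
/- Let N₀ > 0, r > 0, ω ∈ 𝕊¹ and ψ₀ ∈ L²(ℝ²). Then ‖P_{T_r(ω)} P_{⟨ξ⟩∼N₀} (|ψ₀|²)‖_{L²} ≲ (rN₀)^{1/2} ‖ψ₀‖²_{L²}, with implicit constant independent of N₀, r, ω, ψ₀. -/
/-! By Cauchy–Schwarz and translation invariance of Lebesgue measure, the autocorrelation
`ξ ↦ ∫ ψ η * conj (ψ (η - ξ))` is bounded pointwise by `‖ψ‖₂²`, so its restriction to a set `S`
has `L²` norm at most `‖ψ‖₂² · |S|^{1/2}`. On the annulus `⟨ξ⟩ ∼ N₀` one has `|ξ| < 2 N₀`, so in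
an orthonormal frame `(ω, ω^⊥)` the strip-annulus intersection lies in a rectangle of sides
`4 N₀` and `2 c r`, whence `|S| ≤ 8 c r N₀`. -/

open MeasureTheory
open scoped RealInnerProductSpace ENNReal

theorem enorm_integral_mul_conj_le {α 𝕜 : Type*} [RCLike 𝕜] [MeasurableSpace α] {μ : Measure α}
    {f g : α → 𝕜} (hf : AEStronglyMeasurable f μ) (hg : AEStronglyMeasurable g μ) :
    ‖∫ x, f x * starRingEnd 𝕜 (g x) ∂μ‖ₑ ≤ eLpNorm f 2 μ * eLpNorm g 2 μ :=
  calc ‖∫ x, f x * starRingEnd 𝕜 (g x) ∂μ‖ₑ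
      ≤ eLpNorm (fun x => f x * starRingEnd 𝕜 (g x)) 1 μ := by
        rw [eLpNorm_one_eq_lintegral_enorm]
        exact enorm_integral_le_lintegral_enorm _
    _ ≤ eLpNorm f 2 μ * eLpNorm g 2 μ := by
        simpa using eLpNorm_le_eLpNorm_mul_eLpNorm_of_nnnorm (p := 2) (q := 2) (r := 1) hf hg
          (fun a b => a * starRingEnd 𝕜 b) 1 (.of_forall fun x => by simp)

theorem enorm_integral_mul_conj_comp_sub_le {G 𝕜 : Type*} [RCLike 𝕜] [AddGroup G]
    [MeasurableSpace G] [MeasurableAdd G] {μ : Measure G} [μ.IsAddRightInvariant]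
    {ψ : G → 𝕜} (hψ : AEStronglyMeasurable ψ μ) (ξ : G) :
    ‖∫ η, ψ η * starRingEnd 𝕜 (ψ (η - ξ)) ∂μ‖ₑ ≤ eLpNorm ψ 2 μ * eLpNorm ψ 2 μ := by
  have hshift := measurePreserving_sub_right μ ξ
  calc _ ≤ eLpNorm ψ 2 μ * eLpNorm (ψ ∘ (· - ξ)) 2 μ :=
        enorm_integral_mul_conj_le hψ (hψ.comp_measurePreserving hshift)
    _ = eLpNorm ψ 2 μ * eLpNorm ψ 2 μ := by rw [eLpNorm_comp_measurePreserving hψ hshift]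

theorem eLpNorm_indicator_le_of_forall_enorm_le {α ε : Type*} [MeasurableSpace α]
    {μ : Measure α} [TopologicalSpace ε] [ESeminormedAddMonoid ε] {p : ℝ≥0∞} {s : Set α}
    (hs : MeasurableSet s) {f : α → ε} {C : ℝ≥0∞} (hf : ∀ x ∈ s, ‖f x‖ₑ ≤ C) :
    eLpNorm (s.indicator f) p μ ≤ C * μ s ^ p.toReal⁻¹ := by
  rw [eLpNorm_indicator_eq_eLpNorm_restrict hs, ← Measure.restrict_apply_univ]
  exact eLpNorm_le_of_ae_enorm_bound ((ae_restrict_iff' hs).2 (.of_forall hf))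

theorem EuclideanSpace.volume_setOf_forall_mem {ι : Type*} [Fintype ι] (s : ι → Set ℝ) :
    volume {v : EuclideanSpace ℝ ι | ∀ i, v i ∈ s i} = ∏ i, volume (s i) := by
  rw [← volume_pi_pi, ← (PiLp.volume_preserving_ofLp ι).measure_preimage_emb
    (MeasurableEquiv.toLp 2 (ι → ℝ)).symm.measurableEmbedding]
  congr 1
  ext v
  simp

theorem OrthonormalBasis.volume_setOf_forall_inner_mem {ι E : Type*} [Fintype ι]
    [NormedAddCommGroup E] [InnerProductSpace ℝ E] [FiniteDimensional ℝ E] [MeasurableSpace E]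
    [BorelSpace E] (b : OrthonormalBasis ι ℝ E) (s : ι → Set ℝ) :
    volume {x : E | ∀ i, ⟪b i, x⟫ ∈ s i} = ∏ i, volume (s i) := by
  rw [← EuclideanSpace.volume_setOf_forall_mem, ← b.measurePreserving_repr.measure_preimage_emb
    b.measurableEquiv.measurableEmbedding]
  simp [b.repr_apply_apply]

theorem volume_setOf_norm_sub_inner_smul_le_and_norm_le {E : Type*} [NormedAddCommGroup E]
    [InnerProductSpace ℝ E] [FiniteDimensional ℝ E] [MeasurableSpace E] [BorelSpace E]
    (hE : Module.finrank ℝ E = 2) {ω : E} (hω : ‖ω‖ = 1) (a R : ℝ) :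
    volume {ξ : E | ‖ξ - ⟪ξ, ω⟫ • ω‖ ≤ a ∧ ‖ξ‖ ≤ R}
      ≤ ENNReal.ofReal (2 * R) * ENNReal.ofReal (2 * a) := by
  obtain ⟨b, hb⟩ := Orthonormal.exists_orthonormalBasis_extension_of_card_eq (ι := Fin 2)
    (v := ![ω, 0]) (s := {0}) (by simpa using hE) (by simp [hω])
  have hb0 : b 0 = ω := hb 0 rfl
  have hb1 : ⟪b 1, ω⟫ = 0 := by
    simpa [hb0] using b.orthonormal.inner_eq_zero (i := 1) (j := 0) (by decide)
  calc volume {ξ : E | ‖ξ - ⟪ξ, ω⟫ • ω‖ ≤ a ∧ ‖ξ‖ ≤ R}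
      ≤ volume {ξ : E | ∀ i, ⟪b i, ξ⟫ ∈ Set.Icc (-![R, a] i) (![R, a] i)} := by
        refine measure_mono fun ξ ⟨hstrip, hball⟩ =>
          Fin.forall_fin_two.2 ⟨abs_le.1 ?_, abs_le.1 ?_⟩
        · calc |⟪b 0, ξ⟫| ≤ ‖ω‖ * ‖ξ‖ := hb0 ▸ abs_real_inner_le_norm ω ξ
            _ ≤ R := by rwa [hω, one_mul]
        · have hperp : ⟪b 1, ξ⟫ = ⟪b 1, ξ - ⟪ξ, ω⟫ • ω⟫ := by
            rw [inner_sub_right, real_inner_smul_right, hb1, mul_zero, sub_zero]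
          calc |⟪b 1, ξ⟫| ≤ ‖b 1‖ * ‖ξ - ⟪ξ, ω⟫ • ω‖ := hperp ▸ abs_real_inner_le_norm _ _
            _ ≤ a := by rwa [b.orthonormal.1 1, one_mul]
    _ = ENNReal.ofReal (2 * R) * ENNReal.ofReal (2 * a) := by
        rw [b.volume_setOf_forall_inner_mem, Fin.prod_univ_two]
        simp [Real.volume_Icc, two_mul]

/- `ψ` stands for the Fourier transform of `ψ₀`: by Plancherel, the Fourier transform of `|ψ₀|²` is
the autocorrelation `ξ ↦ ∫ ψ η * conj (ψ (η - ξ))`. -/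
theorem strip_annulus_product_estimate (c : ℝ) (hc : 0 < c) :
    ∃ C : ℝ, 0 < C ∧
      ∀ (N₀ r : ℝ), 0 < N₀ → 0 < r →
        ∀ ω : EuclideanSpace ℝ (Fin 2), ‖ω‖ = 1 →
          ∀ ψ : EuclideanSpace ℝ (Fin 2) → ℂ, MemLp ψ 2 volume →
            eLpNorm (Set.indicator
                {ξ : EuclideanSpace ℝ (Fin 2) |
                  ‖ξ - ⟪ξ, ω⟫ • ω‖ ≤ c * r ∧
                  N₀ ≤ Real.sqrt (1 + ‖ξ‖ ^ 2) ∧ Real.sqrt (1 + ‖ξ‖ ^ 2) < 2 * N₀}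
                (fun ξ => ∫ η : EuclideanSpace ℝ (Fin 2),
                  ψ η * (starRingEnd ℂ) (ψ (η - ξ)))) 2 volume
              ≤ ENNReal.ofReal (C * (r * N₀) ^ ((1:ℝ)/2)) *
                  (eLpNorm ψ 2 volume * eLpNorm ψ 2 volume) := by
  refine ⟨Real.sqrt (8 * c), by positivity, fun N₀ r hN hr ω hω ψ hψ => ?_⟩
  set s := {ξ : EuclideanSpace ℝ (Fin 2) | ‖ξ - ⟪ξ, ω⟫ • ω‖ ≤ c * r ∧
    N₀ ≤ Real.sqrt (1 + ‖ξ‖ ^ 2) ∧ Real.sqrt (1 + ‖ξ‖ ^ 2) < 2 * N₀}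
  have hs : MeasurableSet s := by measurability
  have hvol : volume s ≤ ENNReal.ofReal (8 * c * (r * N₀)) := by
    calc volume s
        ≤ volume {ξ : EuclideanSpace ℝ (Fin 2) | ‖ξ - ⟪ξ, ω⟫ • ω‖ ≤ c * r ∧ ‖ξ‖ ≤ 2 * N₀} :=
          measure_mono fun ξ ⟨hstrip, _, hlt⟩ =>
            ⟨hstrip, ((Real.le_sqrt_of_sq_le (by linarith)).trans_lt hlt).le⟩
      _ ≤ ENNReal.ofReal (2 * (2 * N₀)) * ENNReal.ofReal (2 * (c * r)) :=
          volume_setOf_norm_sub_inner_smul_le_and_norm_le (by simp) hω _ _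
      _ = ENNReal.ofReal (8 * c * (r * N₀)) := by
          rw [← ENNReal.ofReal_mul (by positivity)]; ring_nf
  calc _ ≤ eLpNorm ψ 2 volume * eLpNorm ψ 2 volume * volume s ^ (2 : ℝ≥0∞).toReal⁻¹ :=
        eLpNorm_indicator_le_of_forall_enorm_le hs fun ξ _ =>
          enorm_integral_mul_conj_comp_sub_le hψ.1 ξ
    _ ≤ eLpNorm ψ 2 volume * eLpNorm ψ 2 volume *
          ENNReal.ofReal (8 * c * (r * N₀)) ^ (2⁻¹ : ℝ) := by
        rw [ENNReal.toReal_ofNat]; gcongr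
    _ = _ := by
        rw [mul_comm, ENNReal.ofReal_rpow_of_nonneg (by positivity) (by norm_num),
          Real.mul_rpow (by positivity) (by positivity), Real.sqrt_eq_rpow, one_div]
end

section
/- Suppose ε > 0 and C > 0 are constants, and suppose that for every initial datum with size D(0) ≥ 1 a solution exists on [0,T] whenever T^{1/2}(1+D(0)) = ε, and moreover sup_{0≤t≤T} D(t) ≤ D(0) + C T^{1/2}. Then iterating: as long as D(t) ≤ 2D(0), the solution extends by the uniform time increment T given by T^{1/2}(1+2D(0)) = ε, and letting n be the smallest integer with nCT^{1/2} > D(0), the solution exists on [0, nT] with nT > ε/(3C). In particular, since ε/(3C) is independent of D(0), the solution extends globally in time. -/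
/-! While `D ≤ 2 D(0)`, the local theory runs with the fixed step `T` defined by
`√T (1 + 2 D(0)) = ε`, and each step raises `D` by at most `C √T`; so `D(kT) ≤ D(0) + k C √T`
stays below `2 D(0)` for `k < n`. Since `D(0) ≥ 1` gives `ε ≤ 3 √T D(0) < 3 √T · n C √T`,
the time reached satisfies `n T > ε / (3C)`. -/

open Real

def LocalExistence (ε C : ℝ) (sol : ℝ → Prop) (D : ℝ → ℝ) : Prop :=
  ∀ t₀ T : ℝ, 0 ≤ t₀ → 0 < T → sol t₀ → √T * (1 + D t₀) ≤ ε →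
    sol (t₀ + T) ∧ ∀ t : ℝ, t₀ ≤ t → t ≤ t₀ + T → D t ≤ D t₀ + C * √T

theorem sol_and_le_of_iterate {sol : ℝ → Prop} {D : ℝ → ℝ} {T δ : ℝ} {n : ℕ} (hsol0 : sol 0)
    (hstep : ∀ k : ℕ, k < n → sol (k * T) → D (k * T) ≤ D 0 + k * δ →
      sol (k * T + T) ∧ D (k * T + T) ≤ D (k * T) + δ) :
    ∀ k ≤ n, sol (k * T) ∧ D (k * T) ≤ D 0 + k * δ := by
  intro k
  induction k with
  | zero => simpa using hsol0
  | succ k ih =>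
    intro hk
    obtain ⟨hs, hD⟩ := ih (Nat.le_of_succ_le hk)
    obtain ⟨hs', hD'⟩ := hstep k hk hs hD
    have hcast : ((k + 1 : ℕ) : ℝ) * T = k * T + T := by push_cast; ring
    rw [hcast]
    exact ⟨hs', by push_cast; linarith⟩

theorem LocalExistence.step {ε C : ℝ} {sol : ℝ → Prop} {D : ℝ → ℝ}
    (hlocal : LocalExistence ε C sol D) {T t₀ : ℝ} (hT : 0 < T)
    (hTε : √T * (1 + 2 * D 0) = ε) (ht₀ : 0 ≤ t₀) (hs : sol t₀) (hD : D t₀ ≤ 2 * D 0) :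
    sol (t₀ + T) ∧ D (t₀ + T) ≤ D t₀ + C * √T := by
  have hsmall : √T * (1 + D t₀) ≤ ε := hTε ▸ by gcongr
  obtain ⟨hs', hD'⟩ := hlocal t₀ T ht₀ hT hs hsmall
  exact ⟨hs', hD' _ (by linarith) le_rfl⟩

theorem div_three_mul_lt_mul {ε C T d x : ℝ} (hC : 0 < C) (hT : 0 < T) (hd : 1 ≤ d)
    (hTε : √T * (1 + 2 * d) = ε) (hx : d < x * (C * √T)) : ε / (3 * C) < x * T := by
  have hsT : 0 < √T := sqrt_pos.mpr hT
  rw [div_lt_iff₀ (by positivity)]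
  calc ε = √T * (1 + 2 * d) := hTε.symm
    _ ≤ 3 * √T * d := by nlinarith
    _ < 3 * √T * (x * (C * √T)) := by gcongr
    _ = x * T * (3 * C) := by linear_combination 3 * C * x * mul_self_sqrt hT.le

theorem cht_iteration_general (ε C : ℝ) (hC : 0 < C)
    (sol : ℝ → Prop) (D : ℝ → ℝ)
    (hsol0 : sol 0)
    (hD1 : ∀ t : ℝ, 1 ≤ D t)
    (hlocal : ∀ t₀ T : ℝ, 0 ≤ t₀ → 0 < T → sol t₀ →
      Real.sqrt T * (1 + D t₀) ≤ ε →
      sol (t₀ + T) ∧ ∀ t : ℝ, t₀ ≤ t → t ≤ t₀ + T → D t ≤ D t₀ + C * Real.sqrt T) :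
    ∀ T : ℝ, 0 < T → Real.sqrt T * (1 + 2 * D 0) = ε →
      ∀ n : ℕ, (∀ m : ℕ, m < n → (m : ℝ) * (C * Real.sqrt T) ≤ D 0) →
        D 0 < (n : ℝ) * (C * Real.sqrt T) →
        sol ((n : ℝ) * T) ∧ ε / (3 * C) < (n : ℝ) * T := by
  intro T hT hTε n hm hn
  have hiter := sol_and_le_of_iterate (n := n) hsol0 fun k hk hs hD =>
    LocalExistence.step hlocal hT hTε (by positivity) hs (by linarith [hm k hk])
  exact ⟨(hiter n le_rfl).1, div_three_mul_lt_mul hC hT (hD1 0) hTε hn⟩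

theorem cht_iteration (ε C : ℝ) (hε : 0 < ε) (hC : 0 < C)
    (sol : ℝ → Prop) (D : ℝ → ℝ)
    (hsol0 : sol 0)
    (hD1 : ∀ t : ℝ, 1 ≤ D t)
    (hlocal : ∀ t₀ T : ℝ, 0 ≤ t₀ → 0 < T → sol t₀ →
      Real.sqrt T * (1 + D t₀) ≤ ε →
      sol (t₀ + T) ∧ ∀ t : ℝ, t₀ ≤ t → t ≤ t₀ + T → D t ≤ D t₀ + C * Real.sqrt T) :
    ∀ T : ℝ, 0 < T → Real.sqrt T * (1 + 2 * D 0) = ε →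
      ∀ n : ℕ, (∀ m : ℕ, m < n → (m : ℝ) * (C * Real.sqrt T) ≤ D 0) →
        D 0 < (n : ℝ) * (C * Real.sqrt T) →
        sol ((n : ℝ) * T) ∧ ε / (3 * C) < (n : ℝ) * T :=
  cht_iteration_general ε C hC sol D hsol0 hD1 hlocal
end
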